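/- Let I be a nonempty proper subset of [n] that is nested and such that all four diagonals δ_1 = {a(I), b(I)}, δ_2 = {a(I), Γ}, δ_3 = {γ, b(I)}, δ_4 = {γ, Γ} are proper (i.e. D_I = {δ_1, δ_2, δ_3, δ_4}). Then the Minkowski coefficient satisfies y_I = ∑_{i=1}^{4} (−1)^{|I ∖ R_{δ_i}|} · w_{δ_i}. -/

import Mathlib

/-!
Swapping the sums in `y_I = ∑_J (-1)^{|I ∖ J|} ∑_{K component of J} (…)` attaches to each nested
`K ⊆ I` the alternating sum over the `J` of which `K` is a component. These `J` are the sets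
between `K` and `I` avoiding `[a(K), b(K)] ∖ K`, an interval of the Boolean lattice, so the sum
vanishes unless `I ⊆ [a(K), b(K)]`. Since the four diagonals of `D_I` are proper, `I` has a down
element strictly between `γ` and `Γ`, and the surviving `K` are exactly those containing all such
inner down elements.

Swapping once more, each proper diagonal `δ` contributes `w_δ - z_{[n]}` times the alternating
sum over those `K` with `δ ∈ W(K)`. For nested `K`, `δ ∈ W(K)` means that `K` contains one
explicit set and avoids another, so this is again an interval sum; it is nonzero exactly for the
four diagonals of `D_I`, where it equals `(-1)^{|I ∖ R_δ|}`. The `z_{[n]}` terms cancel because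
moving the right end of `δ` from `b(I)` to `Γ` flips this sign.
-/

open Finset

attribute [local instance] Classical.propDecidable

namespace AssocPaper

/-- `x` and `y` are consecutive elements of the finite set `S`. -/
def ConsecIn (S : Finset ℕ) (x y : ℕ) : Prop :=
  x ∈ S ∧ y ∈ S ∧ x < y ∧ ∀ z ∈ S, ¬ (x < z ∧ z < y)

/-- `D̄ = D ∪ {0, n+1}`. -/
def Dbar (n : ℕ) (D : Finset ℕ) : Finset ℕ := insert 0 (insert (n + 1) D)

/-- The boundary edges of the `c`-labeled `(n+2)`-gon, given by endpoints `x < y`: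
pairs of consecutive elements of `D̄`; if `U ≠ ∅` also `{0, min U}`, `{max U, n+1}` and
pairs of consecutive elements of `U`; if `U = ∅` also `{0, n+1}`. -/
def IsBoundary (n : ℕ) (D U : Finset ℕ) (x y : ℕ) : Prop :=
  ConsecIn (Dbar n D) x y
    ∨ (U.Nonempty ∧
        ((x = 0 ∧ y ∈ U ∧ ∀ u ∈ U, y ≤ u)
          ∨ (y = n + 1 ∧ x ∈ U ∧ ∀ u ∈ U, u ≤ x)
          ∨ ConsecIn U x y))
    ∨ (U = ∅ ∧ x = 0 ∧ y = n + 1)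

/-- `{x, y}` (with `x < y ≤ n+1`) is a proper diagonal: a diagonal of the
`(n+2)`-gon which is not a boundary edge. -/
def IsProper (n : ℕ) (D U : Finset ℕ) (x y : ℕ) : Prop :=
  x < y ∧ y ≤ n + 1 ∧ ¬ IsBoundary n D U x y

/-- The set `R_δ` for a proper diagonal `δ = {x,y}` with `x < y`. -/
noncomputable def Rdiag (n : ℕ) (D U : Finset ℕ) (x y : ℕ) : Finset ℕ :=
  if x ∈ U then
    (if y ∈ U then (D ∪ U.filter fun u => u ≤ x) ∪ U.filter fun u => y ≤ u
     else D.filter (fun d => d < y) ∪ U.filter fun u => u ≤ x)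
  else
    (if y ∈ U then D.filter (fun d => x < d) ∪ U.filter fun u => y ≤ u
     else D.filter fun d => x < d ∧ d < y)

/-- The extension of `R` to non-proper and degenerate diagonals `δ = {x,y}`, `x ≤ y`:
`R_δ = [n]` if `U = ∅` and `δ = {0,n+1}`; for other non-proper or degenerate `δ`,
`R_δ = ∅` if `x,y ∈ D̄` and `R_δ = [n]` otherwise. -/
noncomputable def Rext (n : ℕ) (D U : Finset ℕ) (x y : ℕ) : Finset ℕ :=
  if IsProper n D U x y then Rdiag n D U x y
  else if U = ∅ ∧ x = 0 ∧ y = n + 1 then Finset.Icc 1 n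
  else if x ∈ U ∨ y ∈ U then Finset.Icc 1 n
  else ∅

/-- The extension of the right-hand sides `z_{R_δ}` to non-proper and degenerate
diagonals, given the values `w` on proper diagonals and the value `zn = z_{[n]}`. -/
noncomputable def zext (n : ℕ) (D U : Finset ℕ) (w : ℕ × ℕ → ℝ) (zn : ℝ) (x y : ℕ) : ℝ :=
  if IsProper n D U x y then w (x, y)
  else if U = ∅ ∧ x = 0 ∧ y = n + 1 then zn
  else if x ∈ U ∨ y ∈ U then zn
  else 0

/-- `a(I)`: the largest element of `D ∪ {0}` smaller than `min I`. -/
noncomputable def aI (D I : Finset ℕ) : ℕ :=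
  ((insert 0 D).filter fun e => ∀ i ∈ I, e < i).sup id

/-- `b(I)`: the smallest element of `D ∪ {n+1}` larger than `max I`. -/
noncomputable def bI (n : ℕ) (D I : Finset ℕ) : ℕ :=
  sInf {e : ℕ | e ∈ insert (n + 1) D ∧ ∀ i ∈ I, i < e}

/-- The minimum element `γ` of `I` (junk value for `I = ∅`). -/
noncomputable def minEl (I : Finset ℕ) : ℕ := sInf {i : ℕ | i ∈ I}

/-- The maximum element `Γ` of `I` (junk value `0` for `I = ∅`). -/
noncomputable def maxEl (I : Finset ℕ) : ℕ := I.sup id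

/-- A nonempty `I ⊆ [n]` is nested if every `d ∈ D` with `a(I) < d < b(I)` lies in `I`. -/
def IsNested (n : ℕ) (D I : Finset ℕ) : Prop :=
  I.Nonempty ∧ I ⊆ Finset.Icc 1 n ∧
    ∀ d ∈ D, aI D I < d → d < bI n D I → d ∈ I

/-- The nested components of `I`: the inclusion-maximal nested subsets of `I`. -/
noncomputable def nestedComponents (n : ℕ) (D I : Finset ℕ) : Finset (Finset ℕ) :=
  I.powerset.filter fun J =>
    IsNested n D J ∧ ∀ K ∈ I.powerset, IsNested n D K → J ⊆ K → J = K

/-- `v(I)`: the number of nested components of `I`. -/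
noncomputable def vI (n : ℕ) (D I : Finset ℕ) : ℕ := (nestedComponents n D I).card

/-- `x` is the last element of one of the up intervals of `J`
(an element of `J ∩ U` whose successor in `U`, if any, is not in `J`). -/
def IsRunEnd (U J : Finset ℕ) (x : ℕ) : Prop :=
  x ∈ J ∧ x ∈ U ∧ ∀ y, ConsecIn U x y → y ∉ J

/-- `y` is the first element of one of the up intervals of `J`
(an element of `J ∩ U` whose predecessor in `U`, if any, is not in `J`). -/
def IsRunStart (U J : Finset ℕ) (y : ℕ) : Prop :=
  y ∈ J ∧ y ∈ U ∧ ∀ x, ConsecIn U x y → x ∉ J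

/-- `{x,y}` is one of the diagonals `δ_1(J), …, δ_{w+1}(J)` associated to a nested
set `J` with `a = a(J)`, `b = b(J)` and up intervals `[α_1,β_1]_U, …, [α_w,β_w]_U`,
namely `{a,α_1}, {β_1,α_2}, …, {β_w,b}` (and `{a,b}` when `w = 0`). -/
def AssocDiag (n : ℕ) (D U J : Finset ℕ) (x y : ℕ) : Prop :=
  x < y ∧ (x = aI D J ∨ IsRunEnd U J x) ∧ (y = bI n D J ∨ IsRunStart U J y) ∧
    ∀ u ∈ J ∩ U, ¬ (x < u ∧ u < y)

/-- `W(J)`: the proper diagonals among the diagonals associated to the nested set `J`. -/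
noncomputable def WJ (n : ℕ) (D U J : Finset ℕ) : Finset (ℕ × ℕ) :=
  (Finset.range (n + 2) ×ˢ Finset.range (n + 2)).filter fun p =>
    AssocDiag n D U J p.1 p.2 ∧ IsProper n D U p.1 p.2

/-- The tight value `z^c_I = ∑_i ( ∑_{j ∈ W(J_i)} w_{δ_j(J_i)} − (|W(J_i)|−1)·z_{[n]} )`,
the sum running over the nested components `J_i` of `I` (so `z^c_∅ = 0`). -/
noncomputable def zc (n : ℕ) (D U : Finset ℕ) (w : ℕ × ℕ → ℝ) (zn : ℝ) (I : Finset ℕ) : ℝ :=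
  ∑ J ∈ nestedComponents n D I,
    ((∑ p ∈ WJ n D U J, w p) - (((WJ n D U J).card : ℝ) - 1) * zn)

/-- The Minkowski coefficient `y_I = ∑_{J ⊆ I} (−1)^{|I∖J|} z^c_J`. -/
noncomputable def yI (n : ℕ) (D U : Finset ℕ) (w : ℕ × ℕ → ℝ) (zn : ℝ) (I : Finset ℕ) : ℝ :=
  ∑ J ∈ I.powerset, (-1 : ℝ) ^ (I \ J).card * zc n D U w zn J

/-- The associahedron right-hand sides `w_δ = |R_δ|·(|R_δ|+1)/2`. -/
noncomputable def wAs (n : ℕ) (D U : Finset ℕ) (p : ℕ × ℕ) : ℝ :=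
  (((Rdiag n D U p.1 p.2).card : ℝ) * (((Rdiag n D U p.1 p.2).card : ℝ) + 1)) / 2

/-- The associahedron value `z_{[n]} = n(n+1)/2`. -/
noncomputable def znAs (n : ℕ) : ℝ := ((n : ℝ) * ((n : ℝ) + 1)) / 2

section Bounds

variable {n : ℕ} {D U K : Finset ℕ}

lemma aI_mem (D K : Finset ℕ) : aI D K ∈ insert 0 D := by
  rcases ((insert 0 D).filter fun e => ∀ i ∈ K, e < i).eq_empty_or_nonempty with h | h
  · simp [aI, h]
  · obtain ⟨e, he, he'⟩ := exists_mem_eq_sup _ h id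
    rw [aI, he']
    exact (mem_filter.mp he).1

lemma le_aI {e : ℕ} (he : e ∈ insert 0 D) (h : ∀ i ∈ K, e < i) : e ≤ aI D K :=
  le_sup (f := id) (mem_filter.mpr ⟨he, h⟩)

lemma aI_lt (hK : K ⊆ Icc 1 n) {i : ℕ} (hi : i ∈ K) : aI D K < i := by
  have : 1 ≤ i := (mem_Icc.mp (hK hi)).1
  exact (Finset.sup_lt_iff (by simp; omega)).mpr fun e he => (mem_filter.mp he).2 i hi

lemma bI_mem_and_lt (hK : K ⊆ Icc 1 n) : bI n D K ∈ insert (n + 1) D ∧ ∀ i ∈ K, i < bI n D K :=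
  Nat.sInf_mem (s := {e | e ∈ insert (n + 1) D ∧ ∀ i ∈ K, i < e})
    ⟨n + 1, by simp, fun i hi => by have := (mem_Icc.mp (hK hi)).2; omega⟩

lemma bI_mem (hK : K ⊆ Icc 1 n) : bI n D K ∈ insert (n + 1) D := (bI_mem_and_lt hK).1

lemma lt_bI (hK : K ⊆ Icc 1 n) {i : ℕ} (hi : i ∈ K) : i < bI n D K := (bI_mem_and_lt hK).2 i hi

lemma bI_le {e : ℕ} (he : e ∈ insert (n + 1) D) (h : ∀ i ∈ K, i < e) : bI n D K ≤ e :=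
  Nat.sInf_le ⟨he, h⟩

lemma aI_notMem (hDU : D ∪ U = Icc 1 n) (hdisj : Disjoint D U) (K : Finset ℕ) : aI D K ∉ U := by
  intro hU
  have : aI D K ∈ Icc 1 n := hDU ▸ mem_union_right D hU
  rcases mem_insert.mp (aI_mem D K) with h | h
  · simp [h] at this
  · exact disjoint_left.mp hdisj h hU

lemma bI_notMem (hDU : D ∪ U = Icc 1 n) (hdisj : Disjoint D U) (hK : K ⊆ Icc 1 n) :
    bI n D K ∉ U := by
  intro hU
  have : bI n D K ∈ Icc 1 n := hDU ▸ mem_union_right D hU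
  rcases mem_insert.mp (bI_mem (D := D) hK) with h | h
  · simp [h] at this
  · exact disjoint_left.mp hdisj h hU

lemma mem_or_mem_of_mem_Icc (hDU : D ∪ U = Icc 1 n) {i : ℕ} (hi : i ∈ Icc 1 n) :
    i ∈ D ∨ i ∈ U :=
  mem_union.mp (hDU ▸ hi)

lemma mem_down_of_notMem_up (hDU : D ∪ U = Icc 1 n) {i : ℕ} (h1 : 1 ≤ i) (hn : i ≤ n)
    (hU : i ∉ U) : i ∈ D :=
  (mem_or_mem_of_mem_Icc hDU (mem_Icc.mpr ⟨h1, hn⟩)).resolve_right hU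

lemma aI_mem_of_ne_zero (h : aI D K ≠ 0) : aI D K ∈ D := by
  simpa [h] using aI_mem D K

lemma bI_mem_of_ne (hK : K ⊆ Icc 1 n) (h : bI n D K ≠ n + 1) : bI n D K ∈ D := by
  simpa [h] using bI_mem (D := D) hK

lemma minEl_mem {I : Finset ℕ} (hI : I.Nonempty) : minEl I ∈ I := Nat.sInf_mem (s := {i | i ∈ I}) hI

lemma minEl_le {I : Finset ℕ} {i : ℕ} (hi : i ∈ I) : minEl I ≤ i := Nat.sInf_le hi

lemma maxEl_mem {I : Finset ℕ} (hI : I.Nonempty) : maxEl I ∈ I := by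
  obtain ⟨i, hi, h⟩ := exists_mem_eq_sup I hI id
  rw [maxEl, h]
  exact hi

lemma le_maxEl {I : Finset ℕ} {i : ℕ} (hi : i ∈ I) : i ≤ maxEl I := le_sup (f := id) hi

end Bounds

section NestedComponents

variable {n : ℕ} {D K : Finset ℕ}

lemma aI_lt_iff (hK : K ⊆ Icc 1 n) {d : ℕ} (hd : d ∈ D) : aI D K < d ↔ ∃ i ∈ K, i ≤ d := by
  refine ⟨fun h => ?_, fun ⟨i, hi, hid⟩ => (aI_lt hK hi).trans_le hid⟩
  by_contra! hlt
  exact (le_aI (mem_insert_of_mem hd) hlt).not_gt h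

lemma lt_bI_iff (hK : K ⊆ Icc 1 n) {d : ℕ} (hd : d ∈ D) : d < bI n D K ↔ ∃ i ∈ K, d ≤ i := by
  refine ⟨fun h => ?_, fun ⟨i, hi, hdi⟩ => hdi.trans_lt (lt_bI hK hi)⟩
  by_contra! hlt
  exact (bI_le (mem_insert_of_mem hd) hlt).not_gt h

lemma isNested_insert (hK : IsNested n D K) {j : ℕ} (hj : j ∈ Icc 1 n)
    (haj : aI D K ≤ j) (hjb : j ≤ bI n D K) : IsNested n D (insert j K) := by
  obtain ⟨hne, hsub, hnest⟩ := hK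
  have hsub' : insert j K ⊆ Icc 1 n := insert_subset hj hsub
  refine ⟨insert_nonempty j K, hsub', fun d hd hda hdb => ?_⟩
  obtain ⟨i, hi, hid⟩ := (aI_lt_iff hsub' hd).mp hda
  obtain ⟨i', hi', hdi'⟩ := (lt_bI_iff hsub' hd).mp hdb
  rcases eq_or_ne d j with rfl | hdj
  · exact mem_insert_self d K
  refine mem_insert_of_mem (hnest d hd ?_ ?_)
  · rcases mem_insert.mp hi with rfl | hi
    · omega
    · exact (aI_lt hsub hi).trans_le hid
  · rcases mem_insert.mp hi' with rfl | hi'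
    · omega
    · exact hdi'.trans_lt (lt_bI hsub hi')

lemma mem_nestedComponents_iff {J : Finset ℕ} (hJ : J ⊆ Icc 1 n) :
    K ∈ nestedComponents n D J ↔
      IsNested n D K ∧ K ⊆ J ∧ ∀ j ∈ J, aI D K ≤ j → j ≤ bI n D K → j ∈ K := by
  simp only [nestedComponents, mem_filter, mem_powerset]
  constructor
  · rintro ⟨hKJ, hK, hmax⟩
    refine ⟨hK, hKJ, fun j hj haj hjb => ?_⟩
    rw [hmax _ (insert_subset hj hKJ) (isNested_insert hK (hJ hj) haj hjb) (subset_insert j K)]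
    exact mem_insert_self j K
  · rintro ⟨hK, hKJ, hclosed⟩
    refine ⟨hKJ, hK, fun K' hK'J hK' hKK' => hKK'.antisymm fun j hj => ?_⟩
    obtain ⟨i, hi⟩ := hK.1
    have hKn := hK.2.1
    have hK'n := hK'.2.1
    refine hclosed j (hK'J hj) ?_ ?_
    · by_contra! hja
      have := (mem_Icc.mp (hK'n hj)).1
      have haD : aI D K ∈ D := aI_mem_of_ne_zero (by omega)
      have haK' : aI D K ∈ K' := hK'.2.2 _ haD
        ((aI_lt_iff hK'n haD).mpr ⟨j, hj, hja.le⟩)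
        ((lt_bI_iff hK'n haD).mpr ⟨i, hKK' hi, (aI_lt hKn hi).le⟩)
      have := hclosed _ (hK'J haK') le_rfl ((aI_lt hKn hi).trans (lt_bI hKn hi)).le
      exact (aI_lt hKn this).false
    · by_contra! hjb
      have := (mem_Icc.mp (hK'n hj)).2
      have hbD : bI n D K ∈ D := bI_mem_of_ne hKn (by omega)
      have hbK' : bI n D K ∈ K' := hK'.2.2 _ hbD
        ((aI_lt_iff hK'n hbD).mpr ⟨i, hKK' hi, (lt_bI hKn hi).le⟩)
        ((lt_bI_iff hK'n hbD).mpr ⟨j, hj, hjb.le⟩)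
      have := hclosed _ (hK'J hbK') ((aI_lt hKn hi).trans (lt_bI hKn hi)).le le_rfl
      exact (lt_bI hKn this).false

end NestedComponents

section AlternatingSums

variable {α R : Type*} [DecidableEq α] [CommRing R]

lemma sum_Icc_neg_one_pow_card_sdiff (s t : Finset α) :
    ∑ J ∈ Icc s t, (-1 : R) ^ #(t \ J) = if s = t then 1 else 0 := by
  by_cases hst : s ⊆ t
  · have hreindex : ∑ J ∈ Icc s t, (-1 : R) ^ #(t \ J) = ∑ T ∈ (t \ s).powerset, (-1 : R) ^ #T :=
      sum_nbij' (t \ ·) (t \ ·)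
        (fun J hJ => by
          obtain ⟨hsJ, -⟩ := mem_Icc.mp hJ
          exact mem_powerset.mpr (sdiff_subset_sdiff le_rfl hsJ))
        (fun T hT => by
          have hT := mem_powerset.mp hT
          refine mem_Icc.mpr ⟨fun x hx => mem_sdiff.mpr ⟨hst hx, fun hxT => ?_⟩, sdiff_subset⟩
          exact (mem_sdiff.mp (hT hxT)).2 hx)
        (fun J hJ => Finset.sdiff_sdiff_eq_self (mem_Icc.mp hJ).2)
        (fun T hT => Finset.sdiff_sdiff_eq_self ((mem_powerset.mp hT).trans sdiff_subset))
        (fun _ _ => rfl)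
    have hcast := congrArg (Int.cast : ℤ → R) (sum_powerset_neg_one_pow_card (x := t \ s))
    push_cast at hcast
    rw [hreindex, hcast]
    exact if_congr ⟨fun h => hst.antisymm (sdiff_eq_empty_iff_subset.mp h),
      fun h => sdiff_eq_empty_iff_subset.mpr h.ge⟩ rfl rfl
  · rw [Icc_eq_empty (fun h => hst h), sum_empty, if_neg (fun h => hst h.le)]

lemma sum_neg_one_pow_card_sdiff_of_subset_of_disjoint (I A B : Finset α) :
    ∑ J ∈ I.powerset.filter (fun J => A ⊆ J ∧ Disjoint J B), (-1 : R) ^ #(I \ J)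
      = if A = I \ B then (-1) ^ #(I \ A) else 0 := by
  have hfilter : I.powerset.filter (fun J => A ⊆ J ∧ Disjoint J B) = Icc A (I \ B) := by
    ext J
    simp only [mem_filter, mem_powerset, mem_Icc, subset_sdiff]
    tauto
  have hcard : ∀ J ∈ Icc A (I \ B), #(I \ J) = #(I ∩ B) + #((I \ B) \ J) := fun J hJ => by
    have hJ := (mem_Icc.mp hJ).2
    rw [card_sdiff_of_subset hJ, card_sdiff_of_subset (hJ.trans sdiff_subset),
      ← card_sdiff_add_card_inter I B]
    have := card_le_card hJ
    omega
  rw [hfilter, sum_congr rfl fun J hJ => by rw [hcard J hJ, pow_add], ← mul_sum,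
    sum_Icc_neg_one_pow_card_sdiff]
  split_ifs with h
  · rw [h, sdiff_sdiff_right_self, mul_one]
    rfl
  · rw [mul_zero]

end AlternatingSums

section AssociatedDiagonals

variable {n : ℕ} {D U K : Finset ℕ} {x y : ℕ}

def forcedIn (D U : Finset ℕ) (x y : ℕ) : Finset ℕ :=
  D.filter (fun d => x < d ∧ d < y) ∪ U.filter (fun u => u = x ∨ u = y)

def forcedOut (D U : Finset ℕ) (x y : ℕ) : Finset ℕ :=
  U.filter (fun u => x < u ∧ u < y) ∪ D.filter (fun d => d = x ∨ d = y)

lemma mem_Dbar_of_notMem (hDU : D ∪ U = Icc 1 n) (hx : x ≤ n + 1) (hxU : x ∉ U) :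
    x ∈ Dbar n D := by
  unfold Dbar
  rcases Nat.eq_zero_or_pos x with rfl | hx0
  · exact mem_insert_self 0 _
  rcases eq_or_lt_of_le hx with rfl | hxn
  · exact mem_insert_of_mem (mem_insert_self _ _)
  exact mem_insert_of_mem (mem_insert_of_mem (mem_down_of_notMem_up hDU hx0 (by omega) hxU))

lemma mem_Dbar_of_mem_insert_zero (h : x ∈ insert 0 D) : x ∈ Dbar n D := by
  simp only [Dbar, mem_insert] at h ⊢
  tauto

lemma mem_Dbar_of_mem_insert_succ (h : x ∈ insert (n + 1) D) : x ∈ Dbar n D := by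
  simp only [Dbar, mem_insert] at h ⊢
  tauto

lemma isBoundary_of_forall_notMem (hx : x ∈ Dbar n D) (hy : y ∈ Dbar n D) (hxy : x < y)
    (hyn : y ≤ n + 1) (hgap : ∀ d ∈ D, ¬(x < d ∧ d < y)) : IsBoundary n D U x y := by
  refine Or.inl ⟨hx, hy, hxy, fun z hz hxzy => ?_⟩
  simp only [Dbar, mem_insert] at hz
  rcases hz with rfl | rfl | hz
  · omega
  · omega
  · exact hgap z hz hxzy

lemma forced_of_assocDiag (hDU : D ∪ U = Icc 1 n) (hdisj : Disjoint D U) (hK : K ⊆ Icc 1 n)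
    (hnest : ∀ d ∈ D, aI D K < d → d < bI n D K → d ∈ K) (h : AssocDiag n D U K x y) :
    forcedIn D U x y ⊆ K ∧ Disjoint K (forcedOut D U x y) := by
  obtain ⟨-, hx, hy, hgap⟩ := h
  have hax : aI D K ≤ x := by
    rcases hx with rfl | hx
    · exact le_rfl
    · exact (aI_lt hK hx.1).le
  have hyb : y ≤ bI n D K := by
    rcases hy with rfl | hy
    · exact le_rfl
    · exact (lt_bI hK hy.1).le
  have hxK : x ∈ U → x ∈ K := fun hxU =>
    (hx.resolve_left fun h => aI_notMem hDU hdisj K (h ▸ hxU)).1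
  have hyK : y ∈ U → y ∈ K := fun hyU =>
    (hy.resolve_left fun h => bI_notMem hDU hdisj hK (h ▸ hyU)).1
  refine ⟨fun i hi => ?_, disjoint_left.mpr fun i hiK hi => ?_⟩
  · simp only [forcedIn, mem_union, mem_filter] at hi
    rcases hi with ⟨hiD, hxi, hiy⟩ | ⟨hiU, rfl | rfl⟩
    · exact hnest i hiD (by omega) (by omega)
    · exact hxK hiU
    · exact hyK hiU
  · simp only [forcedOut, mem_union, mem_filter] at hi
    rcases hi with ⟨hiU, hxiy⟩ | ⟨hiD, rfl | rfl⟩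
    · exact hgap i (mem_inter.mpr ⟨hiK, hiU⟩) hxiy
    · rcases hx with rfl | hx
      · exact (aI_lt hK hiK).false
      · exact disjoint_left.mp hdisj hiD hx.2.1
    · rcases hy with rfl | hy
      · exact (lt_bI hK hiK).false
      · exact disjoint_left.mp hdisj hiD hy.2.1

lemma mem_forcedIn {i : ℕ} :
    i ∈ forcedIn D U x y ↔ i ∈ D ∧ x < i ∧ i < y ∨ i ∈ U ∧ (i = x ∨ i = y) := by
  simp [forcedIn]

lemma mem_forcedOut {i : ℕ} :
    i ∈ forcedOut D U x y ↔ i ∈ U ∧ x < i ∧ i < y ∨ i ∈ D ∧ (i = x ∨ i = y) := by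
  simp [forcedOut]

lemma le_of_mem_forcedIn (hxy : x ≤ y) {i : ℕ} (hi : i ∈ forcedIn D U x y) : x ≤ i ∧ i ≤ y := by
  rcases mem_forcedIn.mp hi with ⟨-, h₁, h₂⟩ | ⟨-, rfl | rfl⟩ <;> omega

lemma le_of_mem_forcedOut (hxy : x ≤ y) {i : ℕ} (hi : i ∈ forcedOut D U x y) : x ≤ i ∧ i ≤ y := by
  rcases mem_forcedOut.mp hi with ⟨-, h₁, h₂⟩ | ⟨-, rfl | rfl⟩ <;> omega

lemma bI_le_succ (hK : K ⊆ Icc 1 n) : bI n D K ≤ n + 1 :=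
  bI_le (mem_insert_self _ _) fun _ hi => Nat.lt_succ_of_le (mem_Icc.mp (hK hi)).2

lemma forcedIn_nonempty (hDU : D ∪ U = Icc 1 n) (hp : IsProper n D U x y) :
    (forcedIn D U x y).Nonempty := by
  obtain ⟨hxy, hyn, hnb⟩ := hp
  by_contra hempty
  have hnot : ∀ i, i ∉ forcedIn D U x y := fun i hi => hempty ⟨i, hi⟩
  have hxU : x ∉ U := fun hxU => hnot x (mem_forcedIn.mpr (Or.inr ⟨hxU, Or.inl rfl⟩))
  have hyU : y ∉ U := fun hyU => hnot y (mem_forcedIn.mpr (Or.inr ⟨hyU, Or.inr rfl⟩))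
  exact hnb (isBoundary_of_forall_notMem (mem_Dbar_of_notMem hDU (by omega) hxU)
    (mem_Dbar_of_notMem hDU hyn hyU) hxy hyn fun d hd h =>
      hnot d (mem_forcedIn.mpr (Or.inl ⟨hd, h⟩)))

lemma eq_aI_or_isRunEnd (hDU : D ∪ U = Icc 1 n) (hK : IsNested n D K) (hp : IsProper n D U x y)
    (hin : forcedIn D U x y ⊆ K) (hout : Disjoint K (forcedOut D U x y)) :
    x = aI D K ∨ IsRunEnd U K x := by
  obtain ⟨-, hKn, hnest⟩ := hK
  obtain ⟨i₀, hi₀⟩ := forcedIn_nonempty hDU hp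
  have hi₀x := le_of_mem_forcedIn hp.1.le hi₀
  have hay : aI D K < y := (aI_lt hKn (hin hi₀)).trans_le hi₀x.2
  have hxb : x < bI n D K := hi₀x.1.trans_lt (lt_bI hKn (hin hi₀))
  have hbn := bI_le_succ (D := D) hKn
  have hnotOut : ∀ i ∈ K, i ∉ forcedOut D U x y := fun i hi => disjoint_left.mp hout hi
  by_cases hxU : x ∈ U
  · have hxK : x ∈ K := hin (mem_forcedIn.mpr (Or.inr ⟨hxU, Or.inl rfl⟩))
    refine Or.inr ⟨hxK, hxU, ?_⟩
    rintro y' ⟨-, hy'U, hxy', hgapU⟩ hy'K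
    rcases lt_trichotomy y' y with hlt | rfl | hgt
    · exact hnotOut y' hy'K (mem_forcedOut.mpr (Or.inl ⟨hy'U, hxy', hlt⟩))
    · exact hp.2.2 (Or.inr (Or.inl ⟨⟨x, hxU⟩, Or.inr (Or.inr ⟨hxU, hy'U, hxy', hgapU⟩)⟩))
    · have hy'n := (mem_Icc.mp (hKn hy'K)).2
      have hyD : y ∈ D := mem_down_of_notMem_up hDU (by omega) (by omega)
        fun hyU => hgapU y hyU ⟨hp.1, hgt⟩
      have hyK : y ∈ K := hnest y hyD (by have := aI_lt (D := D) hKn hxK; omega)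
        (hgt.trans (lt_bI hKn hy'K))
      exact hnotOut y hyK (mem_forcedOut.mpr (Or.inr ⟨hyD, Or.inr rfl⟩))
  · refine Or.inl (le_antisymm ?_ ?_)
    · by_contra! hax
      have hxD : x ∈ D := mem_down_of_notMem_up hDU (by omega) (by omega) hxU
      exact hnotOut x (hnest x hxD hax hxb) (mem_forcedOut.mpr (Or.inr ⟨hxD, Or.inl rfl⟩))
    · by_contra! hxa
      have haD : aI D K ∈ D := aI_mem_of_ne_zero (by omega)
      exact (aI_lt hKn (hin (mem_forcedIn.mpr (Or.inl ⟨haD, hxa, hay⟩)))).false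

lemma eq_bI_or_isRunStart (hDU : D ∪ U = Icc 1 n) (hK : IsNested n D K) (hp : IsProper n D U x y)
    (hin : forcedIn D U x y ⊆ K) (hout : Disjoint K (forcedOut D U x y)) :
    y = bI n D K ∨ IsRunStart U K y := by
  obtain ⟨-, hKn, hnest⟩ := hK
  obtain ⟨i₀, hi₀⟩ := forcedIn_nonempty hDU hp
  have hi₀x := le_of_mem_forcedIn hp.1.le hi₀
  have hay : aI D K < y := (aI_lt hKn (hin hi₀)).trans_le hi₀x.2
  have hxb : x < bI n D K := hi₀x.1.trans_lt (lt_bI hKn (hin hi₀))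
  have hbn := bI_le_succ (D := D) hKn
  have hnotOut : ∀ i ∈ K, i ∉ forcedOut D U x y := fun i hi => disjoint_left.mp hout hi
  by_cases hyU : y ∈ U
  · have hyK : y ∈ K := hin (mem_forcedIn.mpr (Or.inr ⟨hyU, Or.inr rfl⟩))
    refine Or.inr ⟨hyK, hyU, ?_⟩
    rintro x' ⟨hx'U, -, hx'y, hgapU⟩ hx'K
    rcases lt_trichotomy x x' with hlt | rfl | hgt
    · exact hnotOut x' hx'K (mem_forcedOut.mpr (Or.inl ⟨hx'U, hlt, hx'y⟩))
    · exact hp.2.2 (Or.inr (Or.inl ⟨⟨y, hyU⟩, Or.inr (Or.inr ⟨hx'U, hyU, hx'y, hgapU⟩)⟩))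
    · have hx'1 := (mem_Icc.mp (hKn hx'K)).1
      have hyn := (mem_Icc.mp (hKn hyK)).2
      have hxD : x ∈ D := mem_down_of_notMem_up hDU (by omega) (by omega)
        fun hxU => hgapU x hxU ⟨hgt, hp.1⟩
      have hxK : x ∈ K := hnest x hxD ((aI_lt hKn hx'K).trans hgt)
        (hp.1.trans (lt_bI hKn hyK))
      exact hnotOut x hxK (mem_forcedOut.mpr (Or.inr ⟨hxD, Or.inl rfl⟩))
  · refine Or.inl (le_antisymm ?_ ?_)
    · by_contra! hby
      have := hp.2.1
      have hbD : bI n D K ∈ D := bI_mem_of_ne hKn (by omega)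
      exact (lt_bI hKn (hin (mem_forcedIn.mpr (Or.inl ⟨hbD, hxb, hby⟩)))).false
    · by_contra! hyb
      have hyD : y ∈ D := mem_down_of_notMem_up hDU (by omega) (by omega) hyU
      exact hnotOut y (hnest y hyD hay hyb) (mem_forcedOut.mpr (Or.inr ⟨hyD, Or.inr rfl⟩))

lemma mem_WJ_iff (hDU : D ∪ U = Icc 1 n) (hdisj : Disjoint D U) (hK : IsNested n D K) :
    (x, y) ∈ WJ n D U K ↔
      IsProper n D U x y ∧ forcedIn D U x y ⊆ K ∧ Disjoint K (forcedOut D U x y) := by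
  simp only [WJ, mem_filter, mem_product, mem_range]
  constructor
  · rintro ⟨-, hA, hp⟩
    exact ⟨hp, forced_of_assocDiag hDU hdisj hK.2.1 hK.2.2 hA⟩
  · rintro ⟨hp, hin, hout⟩
    have := hp.1
    have := hp.2.1
    refine ⟨⟨by omega, by omega⟩, ⟨hp.1,
      eq_aI_or_isRunEnd hDU hK hp hin hout, eq_bI_or_isRunStart hDU hK hp hin hout,
      fun u hu hxuy => ?_⟩, hp⟩
    obtain ⟨huK, huU⟩ := mem_inter.mp hu
    exact disjoint_left.mp hout huK (mem_forcedOut.mpr (Or.inl ⟨huU, hxuy⟩))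

end AssociatedDiagonals

lemma sum_mul_sum_eq_sum_sum_filter_mul {α γ R : Type*} [CommRing R] [DecidableEq α]
    {s : Finset γ} {t : Finset α} (S : γ → Finset α) (hS : ∀ x ∈ s, S x ⊆ t)
    (c : γ → R) (g : α → R) :
    ∑ x ∈ s, c x * ∑ y ∈ S x, g y = ∑ y ∈ t, (∑ x ∈ s.filter (y ∈ S ·), c x) * g y := by
  simp_rw [mul_sum, sum_mul]
  exact sum_comm' fun x y => by
    simp only [mem_filter]
    exact ⟨fun h => ⟨⟨h.1, h.2⟩, hS x h.1 h.2⟩, fun h => h.1⟩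

section Moebius

variable {n : ℕ} {D : Finset ℕ}

lemma sum_neg_one_pow_filter_mem_nestedComponents {I K : Finset ℕ} (hI : I ⊆ Icc 1 n)
    (hKI : K ⊆ I) :
    ∑ J ∈ I.powerset.filter (K ∈ nestedComponents n D ·), (-1 : ℝ) ^ #(I \ J)
      = if IsNested n D K ∧ I ⊆ Icc (aI D K) (bI n D K) then (-1) ^ #(I \ K) else 0 := by
  by_cases hK : IsNested n D K
  swap
  · rw [if_neg fun h => hK h.1, filter_false_of_mem, sum_empty]
    exact fun J hJ hKJ => hK ((mem_nestedComponents_iff ((mem_powerset.mp hJ).trans hI)).mp hKJ).1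
  set W := Icc (aI D K) (bI n D K)
  have hKW : K ⊆ W := fun i hi => mem_Icc.mpr ⟨(aI_lt hK.2.1 hi).le, (lt_bI hK.2.1 hi).le⟩
  have hfilter : I.powerset.filter (K ∈ nestedComponents n D ·)
      = I.powerset.filter (fun J => K ⊆ J ∧ Disjoint J (W \ K)) := by
    refine filter_congr fun J hJ => ?_
    rw [mem_nestedComponents_iff ((mem_powerset.mp hJ).trans hI)]
    simp only [hK, true_and, disjoint_left, mem_sdiff, W, mem_Icc, not_and, not_not]
    exact and_congr_right fun _ => forall₂_congr fun j _ => ⟨fun h h' => h h'.1 h'.2,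
      fun h h₁ h₂ => h ⟨h₁, h₂⟩⟩
  have hcond : K = I \ (W \ K) ↔ I ⊆ W := by
    constructor
    · intro h i hi
      by_contra hiW
      have : i ∈ I \ (W \ K) := mem_sdiff.mpr ⟨hi, fun h' => hiW (mem_sdiff.mp h').1⟩
      exact hiW (hKW (h ▸ this))
    · intro h
      ext i
      simp only [mem_sdiff, not_and, not_not]
      exact ⟨fun hi => ⟨hKI hi, fun _ => hi⟩, fun hi => hi.2 (h hi.1)⟩
  rw [hfilter, sum_neg_one_pow_card_sdiff_of_subset_of_disjoint]
  exact if_congr (hcond.trans (and_iff_right hK).symm) rfl rfl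

lemma yI_eq_sum_nested {I : Finset ℕ} (U : Finset ℕ) (w : ℕ × ℕ → ℝ) (zn : ℝ)
    (hI : I ⊆ Icc 1 n) :
    yI n D U w zn I = ∑ K ∈ I.powerset.filter
        (fun K => IsNested n D K ∧ I ⊆ Icc (aI D K) (bI n D K)),
      (-1) ^ #(I \ K) * ((∑ p ∈ WJ n D U K, w p) - (#(WJ n D U K) - 1 : ℝ) * zn) := by
  have hsub : ∀ J ∈ I.powerset, nestedComponents n D J ⊆ I.powerset := fun J hJ K hK =>
    mem_powerset.mpr ((mem_powerset.mp (mem_filter.mp hK).1).trans (mem_powerset.mp hJ))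
  rw [yI, sum_filter]
  simp only [zc]
  rw [sum_mul_sum_eq_sum_sum_filter_mul _ hsub]
  refine sum_congr rfl fun K hK => ?_
  rw [sum_neg_one_pow_filter_mem_nestedComponents hI (mem_powerset.mp hK), ite_mul, zero_mul]

end Moebius

section InnerDown

variable {n : ℕ} {D U I : Finset ℕ}

noncomputable def innerDown (D I : Finset ℕ) : Finset ℕ :=
  I.filter (fun i => i ∈ D ∧ i ≠ minEl I ∧ i ≠ maxEl I)

lemma mem_innerDown_iff {d : ℕ} :
    d ∈ innerDown D I ↔ d ∈ I ∧ d ∈ D ∧ minEl I < d ∧ d < maxEl I := by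
  simp only [innerDown, mem_filter]
  constructor
  · rintro ⟨hd, hdD, hγ, hΓ⟩
    exact ⟨hd, hdD, (minEl_le hd).lt_of_ne' hγ, (le_maxEl hd).lt_of_ne hΓ⟩
  · rintro ⟨hd, hdD, hγ, hΓ⟩
    exact ⟨hd, hdD, hγ.ne', hΓ.ne⟩

/-- If `I` had no down element strictly between `γ` and `Γ`, the diagonal joining the
down neighbours of the ends of `I` (`γ` or `a(I)`, `Γ` or `b(I)`) would be a boundary edge. -/
lemma innerDown_nonempty (hI : IsNested n D I)
    (h1 : IsProper n D U (aI D I) (bI n D I)) (h2 : IsProper n D U (aI D I) (maxEl I))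
    (h3 : IsProper n D U (minEl I) (bI n D I)) (h4 : IsProper n D U (minEl I) (maxEl I)) :
    (innerDown D I).Nonempty := by
  by_contra hM
  have hempty : ∀ d ∈ I, d ∈ D → d = minEl I ∨ d = maxEl I := fun d hd hdD => by
    by_contra! h
    exact hM ⟨d, mem_filter.mpr ⟨hd, hdD, h⟩⟩
  have hgap : ∀ x y, aI D I ≤ x → y ≤ bI n D I → (minEl I ∈ D → minEl I ≤ x) →
      (maxEl I ∈ D → y ≤ maxEl I) → ∀ d ∈ D, ¬(x < d ∧ d < y) := by
    intro x y hax hyb hγ hΓ d hdD ⟨hxd, hdy⟩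
    rcases hempty d (hI.2.2 d hdD (by omega) (by omega)) hdD with rfl | rfl
    · exact absurd (hγ hdD) (by omega)
    · exact absurd (hΓ hdD) (by omega)
  have haD : aI D I ∈ Dbar n D := mem_Dbar_of_mem_insert_zero (aI_mem D I)
  have hbD : bI n D I ∈ Dbar n D := mem_Dbar_of_mem_insert_succ (bI_mem hI.2.1)
  have hDD : ∀ {d}, d ∈ D → d ∈ Dbar n D :=
    fun h => mem_Dbar_of_mem_insert_zero (mem_insert_of_mem h)
  have hγ := minEl_mem hI.1
  have hΓ := maxEl_mem hI.1
  have haγ := aI_lt (D := D) hI.2.1 hγ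
  have hΓb := lt_bI (D := D) hI.2.1 hΓ
  by_cases hγD : minEl I ∈ D <;> by_cases hΓD : maxEl I ∈ D
  · exact h4.2.2 (isBoundary_of_forall_notMem (hDD hγD) (hDD hΓD) h4.1 h4.2.1
      (hgap _ _ haγ.le hΓb.le (fun _ => le_rfl) fun _ => le_rfl))
  · exact h3.2.2 (isBoundary_of_forall_notMem (hDD hγD) hbD h3.1 h3.2.1
      (hgap _ _ haγ.le le_rfl (fun _ => le_rfl) fun h => absurd h hΓD))
  · exact h2.2.2 (isBoundary_of_forall_notMem haD (hDD hΓD) h2.1 h2.2.1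
      (hgap _ _ le_rfl hΓb.le (fun h => absurd h hγD) fun _ => le_rfl))
  · exact h1.2.2 (isBoundary_of_forall_notMem haD hbD h1.1 h1.2.1
      (hgap _ _ le_rfl le_rfl (fun h => absurd h hγD) fun h => absurd h hΓD))

variable {K : Finset ℕ}

lemma aI_le_minEl_of_innerDown_subset (hI : IsNested n D I) (hKI : K ⊆ I) {m : ℕ}
    (hm : m ∈ innerDown D I) (hMK : innerDown D I ⊆ K) : aI D K ≤ minEl I := by
  by_contra! h
  obtain ⟨hmI, -, -, hmΓ⟩ := mem_innerDown_iff.mp hm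
  have hKn := hKI.trans hI.2.1
  have haD : aI D K ∈ D := aI_mem_of_ne_zero (by omega)
  have ham : aI D K < m := aI_lt hKn (hMK hm)
  have haI : aI D K ∈ I := hI.2.2 _ haD ((aI_lt hI.2.1 (minEl_mem hI.1)).trans h)
    (ham.trans (lt_bI hI.2.1 hmI))
  exact (aI_lt hKn (hMK (mem_innerDown_iff.mpr ⟨haI, haD, h, ham.trans hmΓ⟩))).false

lemma maxEl_le_bI_of_innerDown_subset (hI : IsNested n D I) (hKI : K ⊆ I) {m : ℕ}
    (hm : m ∈ innerDown D I) (hMK : innerDown D I ⊆ K) : maxEl I ≤ bI n D K := by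
  by_contra! h
  obtain ⟨hmI, -, hγm, -⟩ := mem_innerDown_iff.mp hm
  have hKn := hKI.trans hI.2.1
  have := (mem_Icc.mp (hI.2.1 (maxEl_mem hI.1))).2
  have hbD : bI n D K ∈ D := bI_mem_of_ne hKn (by omega)
  have hmb : m < bI n D K := lt_bI hKn (hMK hm)
  have hbI : bI n D K ∈ I := hI.2.2 _ hbD ((aI_lt hI.2.1 hmI).trans hmb)
    (h.trans (lt_bI hI.2.1 (maxEl_mem hI.1)))
  exact (lt_bI hKn (hMK (mem_innerDown_iff.mpr ⟨hbI, hbD, hγm.trans hmb, h⟩))).false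

lemma isNested_of_innerDown_subset (hI : IsNested n D I) (hKI : K ⊆ I) {m : ℕ}
    (hm : m ∈ innerDown D I) (hMK : innerDown D I ⊆ K) : IsNested n D K := by
  have hKn := hKI.trans hI.2.1
  refine ⟨⟨m, hMK hm⟩, hKn, fun d hdD had hdb => ?_⟩
  obtain ⟨i, hi, hid⟩ := (aI_lt_iff hKn hdD).mp had
  obtain ⟨i', hi', hdi'⟩ := (lt_bI_iff hKn hdD).mp hdb
  have hdI : d ∈ I := hI.2.2 d hdD ((aI_lt hI.2.1 (hKI hi)).trans_le hid)
    (hdi'.trans_lt (lt_bI hI.2.1 (hKI hi')))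
  have := minEl_le (hKI hi)
  have := le_maxEl (hKI hi')
  rcases eq_or_lt_of_le (minEl_le hdI) with hγd | hγd
  · exact (show i = d by omega) ▸ hi
  rcases eq_or_lt_of_le (le_maxEl hdI) with hdΓ | hdΓ
  · exact (show i' = d by omega) ▸ hi'
  exact hMK (mem_innerDown_iff.mpr ⟨hdI, hdD, hγd, hdΓ⟩)

lemma isNested_and_subset_Icc_iff (hI : IsNested n D I) (hM : (innerDown D I).Nonempty)
    (hKI : K ⊆ I) : IsNested n D K ∧ I ⊆ Icc (aI D K) (bI n D K) ↔ innerDown D I ⊆ K := by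
  constructor
  · rintro ⟨hK, hIK⟩ d hd
    obtain ⟨hdI, hdD, hγd, hdΓ⟩ := mem_innerDown_iff.mp hd
    have hγ := mem_Icc.mp (hIK (minEl_mem hI.1))
    have hΓ := mem_Icc.mp (hIK (maxEl_mem hI.1))
    exact hK.2.2 d hdD (by omega) (by omega)
  · intro hMK
    obtain ⟨m, hm⟩ := hM
    have haK := aI_le_minEl_of_innerDown_subset hI hKI hm hMK
    have hbK := maxEl_le_bI_of_innerDown_subset hI hKI hm hMK
    exact ⟨isNested_of_innerDown_subset hI hKI hm hMK, fun i hi =>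
      mem_Icc.mpr ⟨haK.trans (minEl_le hi), (le_maxEl hi).trans hbK⟩⟩

end InnerDown

section Coefficients

variable {n : ℕ} {D U I : Finset ℕ} {x y : ℕ}

/-- The diagonals `δ_1, …, δ_4` of `D_I`, as ordered pairs. -/
noncomputable def cornerDiagonals (n : ℕ) (D I : Finset ℕ) : Finset (ℕ × ℕ) :=
  {aI D I, minEl I} ×ˢ {maxEl I, bI n D I}

lemma eq_aI_or_eq_minEl (hDU : D ∪ U = Icc 1 n) (hI : IsNested n D I) (hxγ : x ≤ minEl I)
    (hγy : minEl I < y) (hin : forcedIn D U x y ⊆ I) : x = aI D I ∨ x = minEl I := by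
  rcases eq_or_lt_of_le hxγ with h | hxγ
  · exact Or.inr h
  refine Or.inl (le_antisymm ?_ ?_)
  · by_contra! hax
    have hγI := minEl_mem hI.1
    have := (mem_Icc.mp (hI.2.1 hγI)).2
    have hxD : x ∈ D := mem_down_of_notMem_up hDU (by omega) (by omega)
      fun hxU => (minEl_le (hin (mem_forcedIn.mpr (Or.inr ⟨hxU, Or.inl rfl⟩)))).not_gt hxγ
    exact (minEl_le (hI.2.2 x hxD hax (hxγ.trans (lt_bI hI.2.1 hγI)))).not_gt hxγ
  · by_contra! hxa
    have haD : aI D I ∈ D := aI_mem_of_ne_zero (by omega)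
    have hay : aI D I < y := (aI_lt hI.2.1 (minEl_mem hI.1)).trans hγy
    exact (aI_lt hI.2.1 (hin (mem_forcedIn.mpr (Or.inl ⟨haD, hxa, hay⟩)))).false

lemma eq_maxEl_or_eq_bI (hDU : D ∪ U = Icc 1 n) (hI : IsNested n D I) (hxΓ : x < maxEl I)
    (hΓy : maxEl I ≤ y) (hyn : y ≤ n + 1) (hin : forcedIn D U x y ⊆ I) :
    y = maxEl I ∨ y = bI n D I := by
  rcases eq_or_lt_of_le hΓy with h | hΓy
  · exact Or.inl h.symm
  have hΓI := maxEl_mem hI.1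
  have hbn := bI_le_succ (D := D) hI.2.1
  refine Or.inr (le_antisymm ?_ ?_)
  · by_contra! hby
    have hbD : bI n D I ∈ D := bI_mem_of_ne hI.2.1 (by omega)
    have hxb : x < bI n D I := hxΓ.trans (lt_bI hI.2.1 hΓI)
    exact (lt_bI hI.2.1 (hin (mem_forcedIn.mpr (Or.inl ⟨hbD, hxb, hby⟩)))).false
  · by_contra! hyb
    have := (mem_Icc.mp (hI.2.1 hΓI)).1
    have hyD : y ∈ D := mem_down_of_notMem_up hDU (by omega) (by omega)
      fun hyU => (le_maxEl (hin (mem_forcedIn.mpr (Or.inr ⟨hyU, Or.inr rfl⟩)))).not_gt hΓy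
    exact (le_maxEl (hI.2.2 y hyD ((aI_lt hI.2.1 hΓI).trans hΓy) hyb)).not_gt hΓy

lemma innerDown_union_forcedIn_eq_iff (hDU : D ∪ U = Icc 1 n) (hdisj : Disjoint D U)
    (hI : IsNested n D I) (hM : (innerDown D I).Nonempty) (hp : IsProper n D U x y) :
    innerDown D I ∪ forcedIn D U x y = I \ forcedOut D U x y ↔
      (x, y) ∈ cornerDiagonals n D I := by
  have hγI := minEl_mem hI.1
  have hΓI := maxEl_mem hI.1
  have haU := aI_notMem hDU hdisj I
  have hbU := bI_notMem hDU hdisj hI.2.1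
  have haγ := aI_lt (D := D) hI.2.1 hγI
  have hΓb := lt_bI (D := D) hI.2.1 hΓI
  obtain ⟨m, hm⟩ := hM
  have hγΓ : minEl I < maxEl I := by
    obtain ⟨-, -, hγm, hmΓ⟩ := mem_innerDown_iff.mp hm
    exact hγm.trans hmΓ
  simp only [cornerDiagonals, mem_product, mem_insert, mem_singleton]
  constructor
  · intro h
    have hin : forcedIn D U x y ⊆ I := subset_union_right.trans (h.trans_subset sdiff_subset)
    have hmem : ∀ {i}, i ∈ I → i ∉ innerDown D I → i ∉ forcedOut D U x y → i ∈ forcedIn D U x y :=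
      fun hi hiM hiOut => (mem_union.mp (h ▸ mem_sdiff.mpr ⟨hi, hiOut⟩)).resolve_left hiM
    have hbounds : ∀ {i}, i ∈ I → i ∉ innerDown D I → x ≤ i ∧ i ≤ y := by
      intro i hi hiM
      by_cases hiOut : i ∈ forcedOut D U x y
      · exact le_of_mem_forcedOut hp.1.le hiOut
      · exact le_of_mem_forcedIn hp.1.le (hmem hi hiM hiOut)
    have hγ := hbounds hγI fun h' => (mem_innerDown_iff.mp h').2.2.1.false
    have hΓ := hbounds hΓI fun h' => (mem_innerDown_iff.mp h').2.2.2.false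
    exact ⟨eq_aI_or_eq_minEl hDU hI hγ.1 (hγΓ.trans_le hΓ.2) hin,
      eq_maxEl_or_eq_bI hDU hI (hγ.1.trans_lt hγΓ) hΓ.2 hp.2.1 hin⟩
  · rintro ⟨hx, hy⟩
    ext i
    simp only [innerDown, mem_union, mem_filter, mem_sdiff, mem_forcedIn, mem_forcedOut]
    have : i ∈ D → i ∉ U := fun h => disjoint_left.mp hdisj h
    have := minEl_le (I := I) (i := i)
    have := le_maxEl (I := I) (i := i)
    have := hI.2.2 i
    have : i ∈ I → i ∈ D ∨ i ∈ U := fun h => mem_or_mem_of_mem_Icc hDU (hI.2.1 h)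
    rcases hx with rfl | rfl <;> rcases hy with rfl | rfl <;> grind

lemma sdiff_Rdiag_eq_inter_forcedOut (hDU : D ∪ U = Icc 1 n) (hdisj : Disjoint D U)
    (hI : IsNested n D I) (hx : x = aI D I ∨ x = minEl I) (hy : y = maxEl I ∨ y = bI n D I) :
    I \ Rdiag n D U x y = I ∩ forcedOut D U x y := by
  have hγI := minEl_mem hI.1
  have hΓI := maxEl_mem hI.1
  have haU := aI_notMem hDU hdisj I
  have hbU := bI_notMem hDU hdisj hI.2.1
  have haγ := aI_lt (D := D) hI.2.1 hγI
  have hΓb := lt_bI (D := D) hI.2.1 hΓI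
  ext i
  simp only [Rdiag, mem_sdiff, mem_inter, mem_forcedOut]
  by_cases hiI : i ∈ I
  · have := minEl_le hiI
    have := le_maxEl hiI
    have : i ∈ D → i ∉ U := fun h => disjoint_left.mp hdisj h
    have := mem_or_mem_of_mem_Icc hDU (hI.2.1 hiI)
    rcases hx with rfl | rfl <;> rcases hy with rfl | rfl <;> split_ifs <;> simp <;> grind
  · simp [hiI]

/-- Moving the right end from `b(I)` to `Γ` toggles exactly `Γ` in `I ∩ forcedOut`. -/
lemma neg_one_pow_card_inter_forcedOut_maxEl (hDU : D ∪ U = Icc 1 n) (hdisj : Disjoint D U)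
    (hI : I ⊆ Icc 1 n) (hne : I.Nonempty) (hxΓ : x < maxEl I) :
    (-1 : ℝ) ^ #(I ∩ forcedOut D U x (maxEl I))
      = -(-1) ^ #(I ∩ forcedOut D U x (bI n D I)) := by
  have hΓI := maxEl_mem hne
  have hΓb := lt_bI (D := D) hI hΓI
  have hlt : ∀ {i}, i ∈ I → i < bI n D I := fun hi => lt_bI hI hi
  have hle : ∀ {i}, i ∈ I → i ≤ maxEl I := fun hi => le_maxEl hi
  have hdisj' : ∀ {i}, i ∈ D → i ∉ U := fun h => disjoint_left.mp hdisj h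
  rcases mem_or_mem_of_mem_Icc hDU (hI hΓI) with hΓD | hΓU
  · have h : I ∩ forcedOut D U x (maxEl I) = insert (maxEl I) (I ∩ forcedOut D U x (bI n D I)) := by
      ext i
      simp only [mem_insert, mem_inter, mem_forcedOut]
      grind
    have hn : maxEl I ∉ I ∩ forcedOut D U x (bI n D I) := by
      simp only [mem_inter, mem_forcedOut]
      grind
    rw [h, card_insert_of_notMem hn, pow_succ, mul_neg_one]
  · have h : I ∩ forcedOut D U x (bI n D I) = insert (maxEl I) (I ∩ forcedOut D U x (maxEl I)) := by
      ext i
      simp only [mem_insert, mem_inter, mem_forcedOut]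
      grind
    have hn : maxEl I ∉ I ∩ forcedOut D U x (maxEl I) := by
      simp only [mem_inter, mem_forcedOut]
      grind
    rw [h, card_insert_of_notMem hn, pow_succ, mul_neg_one, neg_neg]

lemma sum_neg_one_pow_filter_innerDown_subset (hne : I.Nonempty) :
    ∑ K ∈ I.powerset.filter (innerDown D I ⊆ ·), (-1 : ℝ) ^ #(I \ K) = 0 := by
  have hfilter : I.powerset.filter (innerDown D I ⊆ ·)
      = I.powerset.filter (fun K => innerDown D I ⊆ K ∧ Disjoint K ∅) := by
    simp
  rw [hfilter, sum_neg_one_pow_card_sdiff_of_subset_of_disjoint, sdiff_empty, if_neg]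
  intro h
  have hγ : minEl I ∈ innerDown D I := by rw [h]; exact minEl_mem hne
  exact (mem_innerDown_iff.mp hγ).2.2.1.false

lemma sum_neg_one_pow_filter_mem_WJ (hDU : D ∪ U = Icc 1 n) (hdisj : Disjoint D U)
    (hI : IsNested n D I) (hM : (innerDown D I).Nonempty) (hp : IsProper n D U x y) :
    ∑ K ∈ (I.powerset.filter (innerDown D I ⊆ ·)).filter ((x, y) ∈ WJ n D U ·), (-1 : ℝ) ^ #(I \ K)
      = if (x, y) ∈ cornerDiagonals n D I
        then (-1) ^ #(I ∩ forcedOut D U x y) else 0 := by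
  have hfilter : (I.powerset.filter (innerDown D I ⊆ ·)).filter ((x, y) ∈ WJ n D U ·)
      = I.powerset.filter (fun K => innerDown D I ∪ forcedIn D U x y ⊆ K ∧
          Disjoint K (forcedOut D U x y)) := by
    rw [filter_filter]
    refine filter_congr fun K hK => ?_
    have hK := fun hMK => ((isNested_and_subset_Icc_iff hI hM (mem_powerset.mp hK)).mpr hMK).1
    rw [union_subset_iff, and_assoc]
    exact ⟨fun ⟨hMK, hW⟩ => ⟨hMK, ((mem_WJ_iff hDU hdisj (hK hMK)).mp hW).2⟩,
      fun ⟨hMK, hW⟩ => ⟨hMK, (mem_WJ_iff hDU hdisj (hK hMK)).mpr ⟨hp, hW⟩⟩⟩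
  rw [hfilter, sum_neg_one_pow_card_sdiff_of_subset_of_disjoint]
  by_cases h : innerDown D I ∪ forcedIn D U x y = I \ forcedOut D U x y
  · rw [if_pos h, if_pos ((innerDown_union_forcedIn_eq_iff hDU hdisj hI hM hp).mp h), h,
      sdiff_sdiff_right_self]
    rfl
  · rw [if_neg h, if_neg (mt (innerDown_union_forcedIn_eq_iff hDU hdisj hI hM hp).mpr h)]

lemma yI_eq_sum_grid (w : ℕ × ℕ → ℝ) (zn : ℝ) (hI : IsNested n D I)
    (hM : (innerDown D I).Nonempty) :
    yI n D U w zn I = ∑ p ∈ range (n + 2) ×ˢ range (n + 2),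
      (∑ K ∈ (I.powerset.filter (innerDown D I ⊆ ·)).filter (p ∈ WJ n D U ·), (-1 : ℝ) ^ #(I \ K))
        * (w p - zn) := by
  have hF : I.powerset.filter (fun K => IsNested n D K ∧ I ⊆ Icc (aI D K) (bI n D K))
      = I.powerset.filter (innerDown D I ⊆ ·) :=
    filter_congr fun K hK => isNested_and_subset_Icc_iff hI hM (mem_powerset.mp hK)
  have hsplit : ∀ K, (∑ p ∈ WJ n D U K, w p) - (#(WJ n D U K) - 1 : ℝ) * zn
      = ∑ p ∈ WJ n D U K, (w p - zn) + zn := fun K => by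
    rw [sum_sub_distrib, sum_const, nsmul_eq_mul]
    ring
  rw [yI_eq_sum_nested U w zn hI.2.1, hF]
  simp_rw [hsplit, mul_add, sum_add_distrib, ← sum_mul,
    sum_neg_one_pow_filter_innerDown_subset hI.1, zero_mul, add_zero]
  exact sum_mul_sum_eq_sum_sum_filter_mul (WJ n D U) (fun _ _ => filter_subset _ _) _ _

lemma yI_eq_sum_corners (hDU : D ∪ U = Icc 1 n) (hdisj : Disjoint D U)
    (w : ℕ × ℕ → ℝ) (zn : ℝ) (hI : IsNested n D I)
    (h1 : IsProper n D U (aI D I) (bI n D I)) (h2 : IsProper n D U (aI D I) (maxEl I))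
    (h3 : IsProper n D U (minEl I) (bI n D I)) (h4 : IsProper n D U (minEl I) (maxEl I)) :
    yI n D U w zn I = ∑ p ∈ cornerDiagonals n D I,
      (-1 : ℝ) ^ #(I ∩ forcedOut D U p.1 p.2) * (w p - zn) := by
  have hM := innerDown_nonempty hI h1 h2 h3 h4
  have hcorners : cornerDiagonals n D I
      ⊆ range (n + 2) ×ˢ range (n + 2) := by
    have := h1.1
    have := h1.2.1
    have := h2.2.1
    have := h3.1
    intro p hp
    simp only [cornerDiagonals, mem_product, mem_insert, mem_singleton, mem_range] at hp ⊢
    omega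
  rw [yI_eq_sum_grid w zn hI hM, ← sum_subset hcorners]
  · refine sum_congr rfl fun ⟨x, y⟩ hp => ?_
    have hp' : IsProper n D U x y := by
      simp only [cornerDiagonals, mem_product, mem_insert, mem_singleton] at hp
      obtain ⟨rfl | rfl, rfl | rfl⟩ := hp <;> assumption
    rw [sum_neg_one_pow_filter_mem_WJ hDU hdisj hI hM hp', if_pos hp]
  · rintro ⟨x, y⟩ - hxy
    by_cases hp : IsProper n D U x y
    · rw [sum_neg_one_pow_filter_mem_WJ hDU hdisj hI hM hp, if_neg hxy, zero_mul]
    · rw [filter_false_of_mem fun K _ hK => hp (mem_filter.mp hK).2.2, sum_empty, zero_mul]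

end Coefficients

theorem statement8_general (n : ℕ) (D U : Finset ℕ)
    (hDU : D ∪ U = Finset.Icc 1 n) (hdisj : Disjoint D U)
    (w : ℕ × ℕ → ℝ) (zn : ℝ)
    (I : Finset ℕ) (hnested : IsNested n D I)
    (h1 : IsProper n D U (aI D I) (bI n D I))
    (h2 : IsProper n D U (aI D I) (maxEl I))
    (h3 : IsProper n D U (minEl I) (bI n D I))
    (h4 : IsProper n D U (minEl I) (maxEl I)) :
    yI n D U w zn I =
      (-1 : ℝ) ^ (I \ Rdiag n D U (aI D I) (bI n D I)).card * w (aI D I, bI n D I)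
      + (-1 : ℝ) ^ (I \ Rdiag n D U (aI D I) (maxEl I)).card * w (aI D I, maxEl I)
      + (-1 : ℝ) ^ (I \ Rdiag n D U (minEl I) (bI n D I)).card * w (minEl I, bI n D I)
      + (-1 : ℝ) ^ (I \ Rdiag n D U (minEl I) (maxEl I)).card * w (minEl I, maxEl I) := by
  have haγ : aI D I ≠ minEl I := (aI_lt hnested.2.1 (minEl_mem hnested.1)).ne
  have hΓb : maxEl I ≠ bI n D I := (lt_bI hnested.2.1 (maxEl_mem hnested.1)).ne
  have hR : ∀ {x y}, x = aI D I ∨ x = minEl I → y = maxEl I ∨ y = bI n D I →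
      I \ Rdiag n D U x y = I ∩ forcedOut D U x y :=
    sdiff_Rdiag_eq_inter_forcedOut hDU hdisj hnested
  have hsign : ∀ {x}, x < maxEl I → (-1 : ℝ) ^ #(I ∩ forcedOut D U x (maxEl I))
      = -(-1) ^ #(I ∩ forcedOut D U x (bI n D I)) :=
    neg_one_pow_card_inter_forcedOut_maxEl hDU hdisj hnested.2.1 hnested.1
  rw [yI_eq_sum_corners hDU hdisj w zn hnested h1 h2 h3 h4, cornerDiagonals, sum_product,
    sum_pair haγ, sum_pair hΓb, sum_pair hΓb, hR (.inl rfl) (.inr rfl), hR (.inl rfl) (.inl rfl),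
    hR (.inr rfl) (.inr rfl), hR (.inr rfl) (.inl rfl), hsign h2.1, hsign h4.1]
  ring

/-- if `I` is a nonempty proper nested subset of `[n]` such that all
four diagonals `δ_1 = {a,b}`, `δ_2 = {a,Γ}`, `δ_3 = {γ,b}`, `δ_4 = {γ,Γ}` are
proper, then `y_I = ∑_{i=1}^4 (−1)^{|I∖R_{δ_i}|} w_{δ_i}`. -/
theorem statement8 (n : ℕ) (D U : Finset ℕ) (hn : 2 ≤ n)
    (hDU : D ∪ U = Finset.Icc 1 n) (hdisj : Disjoint D U) (h1D : 1 ∈ D) (hnD : n ∈ D)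
    (w : ℕ × ℕ → ℝ) (zn : ℝ)
    (I : Finset ℕ) (hne : I.Nonempty) (hsub : I ⊆ Finset.Icc 1 n)
    (hpropersub : I ≠ Finset.Icc 1 n) (hnested : IsNested n D I)
    (h1 : IsProper n D U (aI D I) (bI n D I))
    (h2 : IsProper n D U (aI D I) (maxEl I))
    (h3 : IsProper n D U (minEl I) (bI n D I))
    (h4 : IsProper n D U (minEl I) (maxEl I)) :
    yI n D U w zn I =
      (-1 : ℝ) ^ (I \ Rdiag n D U (aI D I) (bI n D I)).card * w (aI D I, bI n D I)
      + (-1 : ℝ) ^ (I \ Rdiag n D U (aI D I) (maxEl I)).card * w (aI D I, maxEl I)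
      + (-1 : ℝ) ^ (I \ Rdiag n D U (minEl I) (bI n D I)).card * w (minEl I, bI n D I)
      + (-1 : ℝ) ^ (I \ Rdiag n D U (minEl I) (maxEl I)).card * w (minEl I, maxEl I) :=
  statement8_general n D U hDU hdisj w zn I hnested h1 h2 h3 h4

end AssocPaper
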